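/- Let H(x,ξ) = Σ_j u_j(x_j²+ξ_j²) + V(x) on ℝ^{2n}, where u_1,...,u_n are positive and linearly independent over ℚ, and V is a formal power series in x alone starting at degree 4, invariant under all sign flips x_j ↦ −x_j. Then the Birkhoff normal form polynomials H_1, H_2, H_3, ... (constructed inductively so that a formal canonical transformation brings H to Σ_i H_i(x_1²+ξ_1²,...,x_n²+ξ_n²) modulo higher order) determine the full Taylor series of V at 0. In particular, if two such potentials V and Ṽ yield the same sequence of normal-form polynomials, then V and Ṽ have the same Taylor series at 0. -/

import Mathlib

open MvPolynomial

def LinIndepQ {n : ℕ} (u : Fin n → ℝ) : Prop :=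
  ∀ q : Fin n → ℚ, (∑ j, (q j : ℝ) * u j) = 0 → ∀ j, q j = 0

noncomputable def poisson {n : ℕ} (G F : MvPolynomial (Fin n ⊕ Fin n) ℝ) :
    MvPolynomial (Fin n ⊕ Fin n) ℝ :=
  ∑ j, (pderiv (Sum.inr j) G * pderiv (Sum.inl j) F
        - pderiv (Sum.inl j) G * pderiv (Sum.inr j) F)

noncomputable def Hone {n : ℕ} (u : Fin n → ℝ) : MvPolynomial (Fin n ⊕ Fin n) ℝ :=
  ∑ j, C (u j) * (X (Sum.inl j) ^ 2 + X (Sum.inr j) ^ 2)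

/-- `(ad_G)^k F`. -/
noncomputable def adIter {n : ℕ} (G : MvPolynomial (Fin n ⊕ Fin n) ℝ) :
    ℕ → MvPolynomial (Fin n ⊕ Fin n) ℝ → MvPolynomial (Fin n ⊕ Fin n) ℝ
  | 0, F => F
  | k + 1, F => poisson G (adIter G k F)

/-- The degree-`d` graded component of `exp(ad_G)` applied to the formal series
with homogeneous components `h`, where `G` is homogeneous of degree `2N` (so each
bracket raises degree by `2N - 2`). -/
noncomputable def expAdComp {n : ℕ} (G : MvPolynomial (Fin n ⊕ Fin n) ℝ) (N : ℕ)
    (h : ℕ → MvPolynomial (Fin n ⊕ Fin n) ℝ) (d : ℕ) :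
    MvPolynomial (Fin n ⊕ Fin n) ℝ :=
  ∑ k ∈ Finset.range (d + 1),
    if k * (2 * N - 2) ≤ d then
      ((k.factorial : ℝ)⁻¹) • adIter G k (h (d - k * (2 * N - 2)))
    else 0

/-- Substitution of `x_j² + ξ_j²` into a polynomial of `n` variables. -/
noncomputable def subSq {n : ℕ} (h : MvPolynomial (Fin n) ℝ) :
    MvPolynomial (Fin n ⊕ Fin n) ℝ :=
  aeval (fun j => X (Sum.inl j) ^ 2 + X (Sum.inr j) ^ 2) h

/-- The complexification `x_j = (z_j + z̄_j)/2`, `ξ_j = (z_j - z̄_j)/(2i)`. -/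
noncomputable def toComplexZ {n : ℕ} :
    MvPolynomial (Fin n ⊕ Fin n) ℝ →ₐ[ℝ] MvPolynomial (Fin n ⊕ Fin n) ℂ :=
  aeval (Sum.elim
    (fun j => MvPolynomial.C ((1 : ℂ) / 2) * (X (Sum.inl j) + X (Sum.inr j)))
    (fun j => MvPolynomial.C (-Complex.I / 2) * (X (Sum.inl j) - X (Sum.inr j))))

def IsDiagExp {n : ℕ} (d : (Fin n ⊕ Fin n) →₀ ℕ) : Prop :=
  ∀ j, d (Sum.inl j) = d (Sum.inr j)

/-- `BirkhoffNormalizes u Vc K`: the formal Hamiltonian `H₁ + V` (with `V` given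
by its homogeneous components `Vc`) is brought to the normal form with diagonal
terms `K i = H_i(x₁²+ξ₁²,…,x_n²+ξ_n²)` by the inductive Birkhoff scheme: at step
`N` one conjugates by `exp(ad_{G_N})` with `G_N` homogeneous of degree `2N`
spanned by off-diagonal monomials, and after step `N` all graded components of
degree `≤ 2N` are in normal form. -/
def BirkhoffNormalizes {n : ℕ} (u : Fin n → ℝ)
    (Vc : ℕ → MvPolynomial (Fin n ⊕ Fin n) ℝ)
    (K : ℕ → MvPolynomial (Fin n ⊕ Fin n) ℝ) : Prop :=
  ∃ G : ℕ → MvPolynomial (Fin n ⊕ Fin n) ℝ,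
  ∃ T : ℕ → ℕ → MvPolynomial (Fin n ⊕ Fin n) ℝ,
    (∀ d, T 1 d = if d = 2 then Hone u + Vc 2 else Vc d) ∧
    (∀ N, 2 ≤ N →
      (G N).IsHomogeneous (2 * N) ∧
      (∀ d ∈ (toComplexZ (G N)).support, ¬ IsDiagExp d) ∧
      (∀ d, T N d = expAdComp (G N) N (T (N - 1)) d) ∧
      (∀ i, 2 ≤ i → i ≤ N → T N (2 * i) = K i)) ∧
    (∀ i, 2 ≤ i → ∃ h : MvPolynomial (Fin n) ℝ, h.IsHomogeneous i ∧ K i = subSq h)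

/-!
Complexify by `z_j = x_j + iξ_j`, `z̄_j = x_j - iξ_j`. Then `Q ↦ {Q, H₁}` acts diagonally on the
monomials `z^α z̄^β`, with eigenvalue `2i ∑ u_j (α_j - β_j)`; since the `u_j` are linearly
independent over `ℚ`, it vanishes exactly on the diagonal monomials `α = β`.

At step `N` the degree-`2N` normal form is `K_N = V_{2N} + R_N + {G_N, H₁}`, where the artifact
`R_N` depends only on `V` and the `G_i` in lower degrees. If two potentials agree below degree `2N`
and their schemes agree before step `N`, then `V_{2N} - V'_{2N} = {G'_N - G_N, H₁}`. The right side
has no diagonal part, whereas the diagonal coefficient of `z^m z̄^m` in `x^{2m}` is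
`4^{-|m|} ∏_j (2m_j choose m_j) ≠ 0`. Hence `V_{2N} = V'_{2N}`, and then `G_N = G'_N`, because
`G_N - G'_N` has no diagonal part either. Induction on `N` concludes; odd degrees vanish by parity.
-/

namespace MvPolynomial

variable {R S σ τ : Type*} [CommSemiring R] [CommSemiring S] [Algebra R S]

theorem pderiv_aeval [Fintype σ] [DecidableEq σ] (f : σ → MvPolynomial τ S) (i : τ)
    (p : MvPolynomial σ R) :
    pderiv i (aeval f p) = ∑ v, aeval f (pderiv v p) * pderiv i (f v) := by
  induction p using MvPolynomial.induction_on with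
  | C a => simp
  | add p q hp hq => simp only [map_add, hp, hq, add_mul, Finset.sum_add_distrib]
  | mul_X p w hp =>
    simp only [map_mul, aeval_X, Derivation.leibniz, smul_eq_mul, hp, pderiv_X, Pi.single_apply,
      mul_ite, mul_one, mul_zero, map_add, apply_ite (aeval f), map_zero, add_mul, ite_mul,
      zero_mul, Finset.sum_add_distrib, Finset.sum_ite_eq, Finset.mem_univ, if_true, Finset.mul_sum,
      mul_assoc]

theorem coeff_X_mul_pderiv [DecidableEq σ] (v : σ) (p : MvPolynomial σ R) (e : σ →₀ ℕ) :
    coeff e (X v * pderiv v p) = e v * coeff e p := by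
  induction p using MvPolynomial.induction_on' with
  | monomial d a =>
    rw [X_mul_pderiv_monomial, coeff_smul, coeff_monomial, nsmul_eq_mul]
    split_ifs with h <;> simp [h]
  | add p q hp hq => simp only [map_add, mul_add, coeff_add, hp, hq]

theorem X_add_X_pow_eq_sum_monomial (a b : σ) (k : ℕ) :
    (X a + X b : MvPolynomial σ R) ^ k = ∑ i ∈ Finset.range (k + 1),
      monomial (Finsupp.single a i + Finsupp.single b (k - i)) (k.choose i : R) := by
  rw [add_pow]
  refine Finset.sum_congr rfl fun i _ => ?_
  rw [X_pow_eq_monomial, X_pow_eq_monomial, monomial_mul, one_mul, ← C_eq_coe_nat, mul_comm,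
    C_mul_monomial, mul_one]

theorem coeff_prod_X_add_X_pow {ι : Type*} [Fintype ι] [DecidableEq ι] (k : ι → ℕ)
    (d : ι ⊕ ι →₀ ℕ) :
    coeff d (∏ j, (X (Sum.inl j) + X (Sum.inr j) : MvPolynomial (ι ⊕ ι) R) ^ k j) =
      if ∀ j, d (Sum.inl j) + d (Sum.inr j) = k j then ∏ j, ((k j).choose (d (Sum.inl j)) : R)
      else 0 := by
  set E : (ι → ℕ) → (ι ⊕ ι →₀ ℕ) := fun g =>
    ∑ j, (Finsupp.single (Sum.inl j) (g j) + Finsupp.single (Sum.inr j) (k j - g j))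
  have hE : ∀ g j, E g (Sum.inl j) = g j ∧ E g (Sum.inr j) = k j - g j := by
    intro g j
    simp only [E, Finsupp.finsetSum_apply, Finsupp.add_apply]
    constructor <;> rw [Finset.sum_eq_single j (fun i _ hi => by simp [hi])
      (by simp)] <;> simp
  have hEd : ∀ g ∈ Fintype.piFinset fun j => Finset.range (k j + 1),
      E g = d ↔ g = (fun j => d (Sum.inl j)) ∧ ∀ j, d (Sum.inl j) + d (Sum.inr j) = k j := by
    intro g hg
    have hgk : ∀ j, g j ≤ k j := fun j =>
      Nat.lt_succ_iff.mp (Finset.mem_range.mp (Fintype.mem_piFinset.mp hg j))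
    constructor
    · rintro rfl
      refine ⟨by funext j; exact (hE g j).1.symm, fun j => ?_⟩
      rw [(hE g j).1, (hE g j).2]
      exact Nat.add_sub_of_le (hgk j)
    · rintro ⟨rfl, hcompat⟩
      ext (j | j)
      · exact (hE _ j).1
      · rw [(hE _ j).2, ← hcompat j, Nat.add_sub_cancel_left]
  simp_rw [X_add_X_pow_eq_sum_monomial, Finset.prod_univ_sum, ← monomial_sum_prod, coeff_sum, coeff_monomial]
  rw [Finset.sum_congr rfl fun g hg => if_congr (hEd g hg) rfl rfl]
  split_ifs with hcompat
  · rw [Finset.sum_eq_single_of_mem (fun j => d (Sum.inl j))]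
    · simp [hcompat]
    · simp only [Fintype.mem_piFinset, Finset.mem_range]
      exact fun j => by have := hcompat j; omega
    · intro g _ hne
      simp [hne]
  · simp [hcompat]

theorem forall_mem_support_sub {R σ : Type*} [CommRing R]
    {p q : MvPolynomial σ R} {P : (σ →₀ ℕ) → Prop} (hp : ∀ e ∈ p.support, P e)
    (hq : ∀ e ∈ q.support, P e) : ∀ e ∈ (p - q).support, P e := by
  classical
  intro e he
  rcases Finset.mem_union.mp (support_sub σ p q he) with h | h
  exacts [hp e h, hq e h]

theorem IsHomogeneous.eq_zero_of_odd {R σ : Type*} [CommSemiring R]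
    {P : MvPolynomial σ R} {d : ℕ} (hP : P.IsHomogeneous d)
    (heven : ∀ e ∈ P.support, ∀ i, Even (e i)) (hd : Odd d) : P = 0 := by
  by_contra hne
  obtain ⟨e, he⟩ := support_nonempty.mpr hne
  have hdeg : e.degree = d := by
    rw [Finsupp.degree_eq_weight_one]
    exact hP (mem_support_iff.mp he)
  exact Nat.not_odd_iff_even.mpr (hdeg ▸ Finset.even_sum _ fun i _ => heven e he i) hd

end MvPolynomial

section Complexification

variable {n : ℕ}

@[simp] lemma toComplexZ_C (a : ℝ) :
    toComplexZ (C a : MvPolynomial (Fin n ⊕ Fin n) ℝ) = C (a : ℂ) :=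
  aeval_C _ _

@[simp] lemma toComplexZ_X_inl (j : Fin n) :
    toComplexZ (X (Sum.inl j) : MvPolynomial (Fin n ⊕ Fin n) ℝ) =
      C ((1 : ℂ) / 2) * (X (Sum.inl j) + X (Sum.inr j)) :=
  aeval_X _ _

@[simp] lemma toComplexZ_X_inr (j : Fin n) :
    toComplexZ (X (Sum.inr j) : MvPolynomial (Fin n ⊕ Fin n) ℝ) =
      C (-Complex.I / 2) * (X (Sum.inl j) - X (Sum.inr j)) :=
  aeval_X _ _

lemma pderiv_inl_toComplexZ (k : Fin n) (p : MvPolynomial (Fin n ⊕ Fin n) ℝ) :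
    pderiv (Sum.inl k) (toComplexZ p) = C ((1 : ℂ) / 2) * toComplexZ (pderiv (Sum.inl k) p) +
      C (-Complex.I / 2) * toComplexZ (pderiv (Sum.inr k) p) := by
  rw [toComplexZ, pderiv_aeval, Fintype.sum_sum_type]
  simp [Pi.single_apply, mul_comm]

lemma pderiv_inr_toComplexZ (k : Fin n) (p : MvPolynomial (Fin n ⊕ Fin n) ℝ) :
    pderiv (Sum.inr k) (toComplexZ p) = C ((1 : ℂ) / 2) * toComplexZ (pderiv (Sum.inl k) p) +
      C (Complex.I / 2) * toComplexZ (pderiv (Sum.inr k) p) := by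
  rw [toComplexZ, pderiv_aeval, Fintype.sum_sum_type]
  simp [Pi.single_apply, mul_comm, neg_div]

lemma pderiv_inl_Hone (u : Fin n → ℝ) (j : Fin n) :
    pderiv (Sum.inl j) (Hone u) = C (2 * u j) * X (Sum.inl j) := by
  simp [Hone, Pi.single_apply, map_ofNat]
  ring

lemma pderiv_inr_Hone (u : Fin n → ℝ) (j : Fin n) :
    pderiv (Sum.inr j) (Hone u) = C (2 * u j) * X (Sum.inr j) := by
  simp [Hone, Pi.single_apply, map_ofNat]
  ring

lemma toComplexZ_poisson_Hone (u : Fin n → ℝ) (Q : MvPolynomial (Fin n ⊕ Fin n) ℝ) :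
    toComplexZ (poisson Q (Hone u)) = ∑ j, C (2 * (u j : ℂ) * Complex.I) *
      (X (Sum.inl j) * pderiv (Sum.inl j) (toComplexZ Q) -
        X (Sum.inr j) * pderiv (Sum.inr j) (toComplexZ Q)) := by
  rw [poisson, map_sum]
  refine Finset.sum_congr rfl fun j _ => ?_
  have hI : (C Complex.I : MvPolynomial (Fin n ⊕ Fin n) ℂ) ^ 2 = -1 := by
    rw [← map_pow, Complex.I_sq, map_neg, map_one]
  have hnegI : (C (-Complex.I / 2) : MvPolynomial (Fin n ⊕ Fin n) ℂ) =
      -(C Complex.I * C (1 / 2)) := by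
    rw [← map_mul, ← map_neg]; congr 1; ring
  have hI2 : (C (Complex.I / 2) : MvPolynomial (Fin n ⊕ Fin n) ℂ) = C Complex.I * C (1 / 2) := by
    rw [← map_mul]; congr 1; ring
  simp only [pderiv_inl_Hone, pderiv_inr_Hone, pderiv_inl_toComplexZ, pderiv_inr_toComplexZ,
    map_sub, map_mul, toComplexZ_C, toComplexZ_X_inl, toComplexZ_X_inr, hnegI, hI2]
  push_cast
  simp only [map_ofNat]
  linear_combination (2 * C (u j : ℂ) * C (1 / 2) * toComplexZ (pderiv (Sum.inr j) Q) *
    (X (Sum.inl j) + X (Sum.inr j))) * hI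

noncomputable def eigenvalueHone (u : Fin n → ℝ) (e : (Fin n ⊕ Fin n) →₀ ℕ) : ℂ :=
  2 * Complex.I * ∑ j, (u j : ℂ) * ((e (Sum.inl j) : ℂ) - e (Sum.inr j))

lemma coeff_toComplexZ_poisson_Hone (u : Fin n → ℝ) (Q : MvPolynomial (Fin n ⊕ Fin n) ℝ)
    (e : (Fin n ⊕ Fin n) →₀ ℕ) :
    coeff e (toComplexZ (poisson Q (Hone u))) = eigenvalueHone u e * coeff e (toComplexZ Q) := by
  simp only [toComplexZ_poisson_Hone, coeff_sum, coeff_C_mul, coeff_sub, coeff_X_mul_pderiv,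
    eigenvalueHone, Finset.mul_sum, Finset.sum_mul]
  exact Finset.sum_congr rfl fun j _ => by ring

lemma eigenvalueHone_eq_zero (u : Fin n → ℝ) {e : (Fin n ⊕ Fin n) →₀ ℕ} (he : IsDiagExp e) :
    eigenvalueHone u e = 0 := by
  simp [eigenvalueHone, he _]

lemma eigenvalueHone_ne_zero {u : Fin n → ℝ} (hind : LinIndepQ u) {e : (Fin n ⊕ Fin n) →₀ ℕ}
    (he : ¬ IsDiagExp e) : eigenvalueHone u e ≠ 0 := by
  refine fun h => he fun j => ?_
  set q : Fin n → ℚ := fun j => (e (Sum.inl j) : ℚ) - e (Sum.inr j)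
  have hsum : ∑ j, (q j : ℝ) * u j = 0 := by
    have h' : ∑ j, (u j : ℂ) * ((e (Sum.inl j) : ℂ) - e (Sum.inr j)) = 0 := by
      simpa [eigenvalueHone, Complex.I_ne_zero] using h
    exact_mod_cast (by simpa [q, mul_comm] using h' :
      ((∑ j, (q j : ℝ) * u j : ℝ) : ℂ) = 0)
  exact_mod_cast sub_eq_zero.mp (hind q hsum j)

lemma toComplexZ_injective : Function.Injective (toComplexZ (n := n)) := by
  -- substituting `z = x + iξ`, `z̄ = x - iξ` undoes `toComplexZ`
  let g : Fin n ⊕ Fin n → MvPolynomial (Fin n ⊕ Fin n) ℂ :=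
    Sum.elim (fun j => X (Sum.inl j) + C Complex.I * X (Sum.inr j))
      (fun j => X (Sum.inl j) - C Complex.I * X (Sum.inr j))
  have hinv : ((aeval g).restrictScalars ℝ).comp toComplexZ = mapAlgHom (Algebra.ofId ℝ ℂ) := by
    apply algHom_ext
    rintro (j | j) <;>
      simp only [AlgHom.coe_comp, AlgHom.coe_restrictScalars', Function.comp_apply, toComplexZ_X_inl,
        toComplexZ_X_inr, map_mul, map_add, map_sub, aeval_C, aeval_X] <;>
      simp only [g, Sum.elim_inl, Sum.elim_inr, ← smul_eq_C_mul, algebraMap_eq, mapAlgHom_apply,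
        map_X] <;>
      match_scalars <;> grind [Complex.I_sq]
  intro p q hpq
  have h := congrArg ((aeval g).restrictScalars ℝ) hpq
  rw [← AlgHom.comp_apply, ← AlgHom.comp_apply, hinv] at h
  exact map_injective _ Complex.ofReal_injective h

noncomputable def diagExp (m : Fin n → ℕ) : (Fin n ⊕ Fin n) →₀ ℕ :=
  Finsupp.equivFunOnFinite.symm (Sum.elim m m)

noncomputable def doubleXExp (m : Fin n → ℕ) : (Fin n ⊕ Fin n) →₀ ℕ :=
  Finsupp.equivFunOnFinite.symm (Sum.elim (2 • m) 0)

@[simp] lemma diagExp_inl (m : Fin n → ℕ) (j : Fin n) : diagExp m (Sum.inl j) = m j := rfl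

@[simp] lemma diagExp_inr (m : Fin n → ℕ) (j : Fin n) : diagExp m (Sum.inr j) = m j := rfl

@[simp] lemma doubleXExp_inl (m : Fin n → ℕ) (j : Fin n) :
    doubleXExp m (Sum.inl j) = 2 * m j := rfl

@[simp] lemma doubleXExp_inr (m : Fin n → ℕ) (j : Fin n) : doubleXExp m (Sum.inr j) = 0 := rfl

noncomputable def centralBinomialFactor (m : Fin n → ℕ) : ℂ :=
  (1 / 2) ^ (2 * ∑ j, m j) * ∏ j, ((2 * m j).choose (m j) : ℂ)

lemma centralBinomialFactor_ne_zero (m : Fin n → ℕ) : centralBinomialFactor m ≠ 0 :=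
  mul_ne_zero (by simp) (Finset.prod_ne_zero_iff.mpr fun j _ =>
    Nat.cast_ne_zero.mpr (Nat.choose_pos (by omega)).ne')

lemma toComplexZ_monomial_of_inr_eq_zero {e : (Fin n ⊕ Fin n) →₀ ℕ} (he : ∀ j, e (Sum.inr j) = 0)
    (a : ℝ) :
    toComplexZ (monomial e a) = C ((a : ℂ) * (1 / 2) ^ ∑ j, e (Sum.inl j)) *
      ∏ j, (X (Sum.inl j) + X (Sum.inr j)) ^ e (Sum.inl j) := by
  rw [toComplexZ, aeval_monomial, Finsupp.prod_fintype _ _ fun _ => pow_zero _,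
    Fintype.prod_sum_type]
  simp only [Sum.elim_inl, Sum.elim_inr, he, pow_zero, Finset.prod_const_one, mul_one, mul_pow,
    ← map_pow, Finset.prod_mul_distrib, ← map_prod, Finset.prod_pow_eq_pow_sum,
    MvPolynomial.algebraMap_apply, Complex.coe_algebraMap, map_mul, mul_assoc]

lemma coeff_diagExp_toComplexZ_monomial {e : (Fin n ⊕ Fin n) →₀ ℕ} (he : ∀ j, e (Sum.inr j) = 0)
    (a : ℝ) (m : Fin n → ℕ) :
    coeff (diagExp m) (toComplexZ (monomial e a)) =
      if e = doubleXExp m then (a : ℂ) * centralBinomialFactor m else 0 := by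
  have hiff : (∀ j, diagExp m (Sum.inl j) + diagExp m (Sum.inr j) = e (Sum.inl j)) ↔
      e = doubleXExp m := by
    refine ⟨fun h => ?_, by rintro rfl j; simp [two_mul]⟩
    ext (j | j)
    · simp [← h j, two_mul]
    · simp [he j]
  rw [toComplexZ_monomial_of_inr_eq_zero he, coeff_C_mul, coeff_prod_X_add_X_pow]
  simp only [hiff]
  split_ifs with h
  · subst h
    simp [centralBinomialFactor, Finset.mul_sum, mul_assoc]
  · rw [mul_zero]

lemma coeff_diagExp_toComplexZ {P : MvPolynomial (Fin n ⊕ Fin n) ℝ}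
    (hP : ∀ e ∈ P.support, ∀ j, e (Sum.inr j) = 0) (m : Fin n → ℕ) :
    coeff (diagExp m) (toComplexZ P) = coeff (doubleXExp m) P * centralBinomialFactor m := by
  conv_lhs => rw [P.as_sum, map_sum, coeff_sum]
  rw [Finset.sum_congr rfl fun e he => coeff_diagExp_toComplexZ_monomial (hP e he) _ m,
    Finset.sum_ite_eq']
  split_ifs with h
  · rfl
  · simp [notMem_support_iff.mp h]

lemma eq_zero_of_coeff_diagExp_toComplexZ {P : MvPolynomial (Fin n ⊕ Fin n) ℝ}
    (hx : ∀ e ∈ P.support, ∀ j, e (Sum.inr j) = 0)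
    (heven : ∀ e ∈ P.support, ∀ j, Even (e (Sum.inl j)))
    (h : ∀ m, coeff (diagExp m) (toComplexZ P) = 0) : P = 0 := by
  ext e
  rw [coeff_zero]
  by_contra he
  have hsupp : e ∈ P.support := mem_support_iff.mpr he
  set m : Fin n → ℕ := fun j => e (Sum.inl j) / 2
  have hm : doubleXExp m = e := by
    ext (j | j)
    · simp [m, Nat.mul_div_cancel' (even_iff_two_dvd.mp (heven e hsupp j))]
    · simp [hx e hsupp j]
  have hcoeff := h m
  rw [coeff_diagExp_toComplexZ hx, hm] at hcoeff
  exact he (by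
    exact_mod_cast (mul_eq_zero.mp hcoeff).resolve_right (centralBinomialFactor_ne_zero m))

end Complexification

section Poisson

variable {n : ℕ}

lemma eq_zero_of_eq_poisson_Hone {u : Fin n → ℝ} (hind : LinIndepQ u)
    {W Q : MvPolynomial (Fin n ⊕ Fin n) ℝ} (hx : ∀ e ∈ W.support, ∀ j, e (Sum.inr j) = 0)
    (heven : ∀ e ∈ W.support, ∀ j, Even (e (Sum.inl j)))
    (hQ : ∀ d ∈ (toComplexZ Q).support, ¬ IsDiagExp d) (h : W = poisson Q (Hone u)) :
    W = 0 ∧ Q = 0 := by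
  have hcoeff : ∀ e, coeff e (toComplexZ W) = eigenvalueHone u e * coeff e (toComplexZ Q) := by
    subst h
    exact coeff_toComplexZ_poisson_Hone u Q
  have hW : W = 0 := eq_zero_of_coeff_diagExp_toComplexZ hx heven fun m => by
    rw [hcoeff, eigenvalueHone_eq_zero u fun j => rfl, zero_mul]
  refine ⟨hW, toComplexZ_injective ?_⟩
  ext e
  rw [map_zero, coeff_zero]
  by_cases hd : IsDiagExp e
  · exact notMem_support_iff.mp fun he => hQ e he hd
  · have h0 := hcoeff e
    rw [hW, map_zero, coeff_zero, eq_comm] at h0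
    exact (mul_eq_zero.mp h0).resolve_left (eigenvalueHone_ne_zero hind hd)

lemma poisson_zero_right (G : MvPolynomial (Fin n ⊕ Fin n) ℝ) : poisson G 0 = 0 := by
  simp [poisson]

lemma poisson_sub_left (A B F : MvPolynomial (Fin n ⊕ Fin n) ℝ) :
    poisson (A - B) F = poisson A F - poisson B F := by
  simp only [poisson, map_sub, ← Finset.sum_sub_distrib]
  exact Finset.sum_congr rfl fun j _ => by ring

lemma adIter_zero_right (G : MvPolynomial (Fin n ⊕ Fin n) ℝ) (k : ℕ) : adIter G k 0 = 0 := by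
  induction k with
  | zero => rfl
  | succ k ih => rw [adIter, ih, poisson_zero_right]

end Poisson

section ExpAd

variable {n : ℕ} (G : MvPolynomial (Fin n ⊕ Fin n) ℝ) (N : ℕ)
  (h : ℕ → MvPolynomial (Fin n ⊕ Fin n) ℝ)

lemma expAdComp_zero : expAdComp G N h 0 = h 0 := by
  simp [expAdComp, adIter]

lemma expAdComp_eq_add_sum (d : ℕ) :
    expAdComp G N h d = h d + ∑ k ∈ Finset.range d,
      if (k + 1) * (2 * N - 2) ≤ d then
        (((k + 1).factorial : ℝ)⁻¹) • adIter G (k + 1) (h (d - (k + 1) * (2 * N - 2)))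
      else 0 := by
  rw [expAdComp, Finset.sum_range_succ', add_comm]
  simp [adIter]

variable {N}

lemma expAdComp_sub_self_congr (hN : 2 ≤ N) {h' : ℕ → MvPolynomial (Fin n ⊕ Fin n) ℝ} {d : ℕ}
    (hh : ∀ d' < d, h d' = h' d') : expAdComp G N h d - h d = expAdComp G N h' d - h' d := by
  rw [expAdComp_eq_add_sum, expAdComp_eq_add_sum, add_sub_cancel_left, add_sub_cancel_left]
  refine Finset.sum_congr rfl fun k _ => ?_
  have : 2 * N - 2 ≤ (k + 1) * (2 * N - 2) := Nat.le_mul_of_pos_left _ k.succ_pos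
  split_ifs with hk
  · rw [hh _ (by omega)]
  · rfl

lemma expAdComp_two (hN : 2 ≤ N) (h0 : h 0 = 0) : expAdComp G N h 2 = h 2 := by
  rw [expAdComp_eq_add_sum, add_eq_left]
  refine Finset.sum_eq_zero fun k _ => ?_
  have : 2 * N - 2 ≤ (k + 1) * (2 * N - 2) := Nat.le_mul_of_pos_left _ k.succ_pos
  split_ifs with hk
  · rw [show 2 - (k + 1) * (2 * N - 2) = 0 by omega, h0, adIter_zero_right, smul_zero]
  · rfl

lemma expAdComp_double (hN : 2 ≤ N) (h0 : h 0 = 0) :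
    expAdComp G N h (2 * N) = h (2 * N) + poisson G (h 2) := by
  rw [expAdComp_eq_add_sum, Finset.sum_eq_single_of_mem 0 (by simp; omega)]
  · rw [if_pos (by omega), show 2 * N - (0 + 1) * (2 * N - 2) = 2 by omega]
    simp [adIter]
  · intro k _ hk
    have : 2 * (2 * N - 2) ≤ (k + 1) * (2 * N - 2) := Nat.mul_le_mul_right _ (by omega)
    split_ifs with hk'
    · rw [show 2 * N - (k + 1) * (2 * N - 2) = 0 by omega, h0, adIter_zero_right, smul_zero]
    · rfl

end ExpAd

section Scheme

variable {n : ℕ}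

structure IsEvenXPotential (Vc : ℕ → MvPolynomial (Fin n ⊕ Fin n) ℝ) : Prop where
  isHomogeneous : ∀ d, (Vc d).IsHomogeneous d
  low : ∀ d, d < 4 → Vc d = 0
  xOnly : ∀ d, ∀ e ∈ (Vc d).support, ∀ j, e (Sum.inr j) = 0
  even : ∀ d, ∀ e ∈ (Vc d).support, ∀ j, Even (e (Sum.inl j))

lemma IsEvenXPotential.eq_zero_of_odd {Vc : ℕ → MvPolynomial (Fin n ⊕ Fin n) ℝ}
    (hV : IsEvenXPotential Vc) {d : ℕ} (hd : Odd d) : Vc d = 0 := by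
  refine (hV.isHomogeneous d).eq_zero_of_odd (fun e he => ?_) hd
  rintro (j | j)
  · exact hV.even d e he j
  · exact hV.xOnly d e he j ▸ even_two_mul 0

structure BirkhoffScheme (u : Fin n → ℝ) (Vc G : ℕ → MvPolynomial (Fin n ⊕ Fin n) ℝ)
    (T : ℕ → ℕ → MvPolynomial (Fin n ⊕ Fin n) ℝ) : Prop where
  start : ∀ d, T 1 d = if d = 2 then Hone u + Vc 2 else Vc d
  step : ∀ N, 2 ≤ N → ∀ d, T N d = expAdComp (G N) N (T (N - 1)) d
  offDiag : ∀ N, 2 ≤ N → ∀ d ∈ (toComplexZ (G N)).support, ¬ IsDiagExp d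

lemma BirkhoffNormalizes.exists_birkhoffScheme {u : Fin n → ℝ}
    {Vc K : ℕ → MvPolynomial (Fin n ⊕ Fin n) ℝ} (h : BirkhoffNormalizes u Vc K) :
    ∃ G T, BirkhoffScheme u Vc G T ∧ ∀ N, 2 ≤ N → T N (2 * N) = K N := by
  obtain ⟨G, T, hstart, hstep, -⟩ := h
  exact ⟨G, T, ⟨hstart, fun N hN => (hstep N hN).2.2.1, fun N hN => (hstep N hN).2.1⟩,
    fun N hN => (hstep N hN).2.2.2 N hN le_rfl⟩

namespace BirkhoffScheme

variable {u : Fin n → ℝ} {Vc Vc' G G' : ℕ → MvPolynomial (Fin n ⊕ Fin n) ℝ}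
  {T T' : ℕ → ℕ → MvPolynomial (Fin n ⊕ Fin n) ℝ}

lemma apply_zero (hS : BirkhoffScheme u Vc G T) (hV0 : Vc 0 = 0) {N : ℕ} (hN : 1 ≤ N) :
    T N 0 = 0 := by
  induction N, hN using Nat.le_induction with
  | base => simp [hS.start, hV0]
  | succ N hN ih => rw [hS.step (N + 1) (by omega), expAdComp_zero, Nat.add_sub_cancel, ih]

lemma apply_two (hS : BirkhoffScheme u Vc G T) (hV0 : Vc 0 = 0) (hV2 : Vc 2 = 0) {N : ℕ}
    (hN : 1 ≤ N) : T N 2 = Hone u := by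
  induction N, hN using Nat.le_induction with
  | base => simp [hS.start, hV2]
  | succ N hN ih =>
    rw [hS.step (N + 1) (by omega), Nat.add_sub_cancel,
      expAdComp_two _ _ (by omega) (hS.apply_zero hV0 hN), ih]

lemma apply_double (hS : BirkhoffScheme u Vc G T) (hV0 : Vc 0 = 0) (hV2 : Vc 2 = 0) {N : ℕ}
    (hN : 2 ≤ N) : T N (2 * N) = T (N - 1) (2 * N) + poisson (G N) (Hone u) := by
  rw [hS.step N hN, expAdComp_double _ _ hN (hS.apply_zero hV0 (by omega)),
    hS.apply_two hV0 hV2 (by omega)]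

lemma sub_potential_eq (hS : BirkhoffScheme u Vc G T) (hS' : BirkhoffScheme u Vc' G' T')
    {D : ℕ} (hV : ∀ d < D, Vc d = Vc' d) {N : ℕ} (hN : 1 ≤ N)
    (hG : ∀ i, 2 ≤ i → i ≤ N → G i = G' i) {d : ℕ} (hd : d ≤ D) :
    T N d - Vc d = T' N d - Vc' d := by
  induction N, hN using Nat.le_induction generalizing d with
  | base =>
    rw [hS.start, hS'.start]
    split_ifs with h2
    · subst h2
      ring
    · rw [sub_self, sub_self]
  | succ N hN ih =>
    have hT : ∀ d' < D, T N d' = T' N d' := fun d' hd' => by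
      simpa [hV d' hd'] using ih (fun i hi hi' => hG i hi (by omega)) hd'.le
    rw [hS.step (N + 1) (by omega), hS'.step (N + 1) (by omega), Nat.add_sub_cancel,
      hG (N + 1) (by omega) le_rfl]
    calc _ = (expAdComp (G' (N + 1)) (N + 1) (T N) d - T N d) + (T N d - Vc d) := by ring
      _ = (expAdComp (G' (N + 1)) (N + 1) (T' N) d - T' N d) + (T' N d - Vc' d) := by
        rw [expAdComp_sub_self_congr _ _ (by omega) fun d' hd' => hT d' (by omega),
          ih (fun i hi hi' => hG i hi (by omega)) hd]
      _ = _ := by ring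

lemma eq_of_eq_below (hind : LinIndepQ u) (hS : BirkhoffScheme u Vc G T)
    (hS' : BirkhoffScheme u Vc' G' T') (hV : IsEvenXPotential Vc) (hV' : IsEvenXPotential Vc')
    {N : ℕ} (hN : 2 ≤ N) (hT : T N (2 * N) = T' N (2 * N))
    (hVlt : ∀ d < 2 * N, Vc d = Vc' d) (hGlt : ∀ i, 2 ≤ i → i < N → G i = G' i) :
    Vc (2 * N) = Vc' (2 * N) ∧ G N = G' N := by
  have hlow := hS.sub_potential_eq hS' hVlt (N := N - 1) (by omega)
    (fun i hi hi' => hGlt i hi (by omega)) le_rfl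
  have hbracket : Vc (2 * N) - Vc' (2 * N) = poisson (G' N - G N) (Hone u) := by
    rw [poisson_sub_left]
    linear_combination hT - hlow - hS.apply_double (hV.low 0 (by omega)) (hV.low 2 (by omega)) hN
      + hS'.apply_double (hV'.low 0 (by omega)) (hV'.low 2 (by omega)) hN
  obtain ⟨hW, hQ⟩ := eq_zero_of_eq_poisson_Hone hind
    (forall_mem_support_sub (hV.xOnly _) (hV'.xOnly _))
    (forall_mem_support_sub (hV.even _) (hV'.even _))
    (by rw [map_sub]; exact forall_mem_support_sub (hS'.offDiag N hN) (hS.offDiag N hN))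
    hbracket
  exact ⟨sub_eq_zero.mp hW, (sub_eq_zero.mp hQ).symm⟩

theorem potential_eq (hind : LinIndepQ u) (hS : BirkhoffScheme u Vc G T)
    (hS' : BirkhoffScheme u Vc' G' T') (hV : IsEvenXPotential Vc) (hV' : IsEvenXPotential Vc')
    (hT : ∀ N, 2 ≤ N → T N (2 * N) = T' N (2 * N)) (d : ℕ) : Vc d = Vc' d := by
  have hagree : ∀ N, 1 ≤ N → (∀ d ≤ 2 * N, Vc d = Vc' d) ∧ ∀ i, 2 ≤ i → i ≤ N → G i = G' i := by
    intro N hN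
    induction N, hN using Nat.le_induction with
    | base => exact ⟨fun d hd => by rw [hV.low d (by omega), hV'.low d (by omega)],
        fun i hi hi' => by omega⟩
    | succ N hN ih =>
      have hVlt : ∀ d < 2 * (N + 1), Vc d = Vc' d := fun d hd => by
        rcases Nat.lt_or_ge (2 * N) d with hd' | hd'
        · have hodd : Odd d := ⟨N, by omega⟩
          rw [hV.eq_zero_of_odd hodd, hV'.eq_zero_of_odd hodd]
        · exact ih.1 d hd'
      obtain ⟨hVN, hGN⟩ := eq_of_eq_below hind hS hS' hV hV' (by omega) (hT _ (by omega)) hVlt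
        fun i hi hi' => ih.2 i hi (by omega)
      refine ⟨fun d hd => ?_, fun i hi hi' => ?_⟩
      · rcases Nat.lt_or_ge d (2 * (N + 1)) with hd' | hd'
        · exact hVlt d hd'
        · exact (show d = 2 * (N + 1) by omega) ▸ hVN
      · rcases Nat.lt_or_ge i (N + 1) with hi'' | hi''
        · exact ih.2 i hi (by omega)
        · exact (show i = N + 1 by omega) ▸ hGN
  exact (hagree (d + 1) (by omega)).1 d (by omega)

end BirkhoffScheme

end Scheme

theorem stmt16_general {n : ℕ} (u : Fin n → ℝ) (hind : LinIndepQ u)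
    (Vc Vc' : ℕ → MvPolynomial (Fin n ⊕ Fin n) ℝ)
    -- the potentials are formal power series in `x` alone, starting at degree 4,
    -- with all exponents even (equivalently, invariant under all sign flips):
    (hhom : ∀ d, (Vc d).IsHomogeneous d) (hhom' : ∀ d, (Vc' d).IsHomogeneous d)
    (hlow : ∀ d, d < 4 → Vc d = 0) (hlow' : ∀ d, d < 4 → Vc' d = 0)
    (hx : ∀ d, ∀ e ∈ (Vc d).support, ∀ j, e (Sum.inr j) = 0)
    (hx' : ∀ d, ∀ e ∈ (Vc' d).support, ∀ j, e (Sum.inr j) = 0)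
    (heven : ∀ d, ∀ e ∈ (Vc d).support, ∀ j, Even (e (Sum.inl j)))
    (heven' : ∀ d, ∀ e ∈ (Vc' d).support, ∀ j, Even (e (Sum.inl j)))
    (K : ℕ → MvPolynomial (Fin n ⊕ Fin n) ℝ)
    (hB : BirkhoffNormalizes u Vc K) (hB' : BirkhoffNormalizes u Vc' K) :
    ∀ d, Vc d = Vc' d := by
  obtain ⟨G, T, hS, hK⟩ := hB.exists_birkhoffScheme
  obtain ⟨G', T', hS', hK'⟩ := hB'.exists_birkhoffScheme
  exact hS.potential_eq hind hS' ⟨hhom, hlow, hx, heven⟩ ⟨hhom', hlow', hx', heven'⟩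
    fun N hN => (hK N hN).trans (hK' N hN).symm

theorem stmt16 {n : ℕ} (u : Fin n → ℝ) (hpos : ∀ j, 0 < u j) (hind : LinIndepQ u)
    (Vc Vc' : ℕ → MvPolynomial (Fin n ⊕ Fin n) ℝ)
    -- the potentials are formal power series in `x` alone, starting at degree 4,
    -- with all exponents even (equivalently, invariant under all sign flips):
    (hhom : ∀ d, (Vc d).IsHomogeneous d) (hhom' : ∀ d, (Vc' d).IsHomogeneous d)
    (hlow : ∀ d, d < 4 → Vc d = 0) (hlow' : ∀ d, d < 4 → Vc' d = 0)
    (hx : ∀ d, ∀ e ∈ (Vc d).support, ∀ j, e (Sum.inr j) = 0)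
    (hx' : ∀ d, ∀ e ∈ (Vc' d).support, ∀ j, e (Sum.inr j) = 0)
    (heven : ∀ d, ∀ e ∈ (Vc d).support, ∀ j, Even (e (Sum.inl j)))
    (heven' : ∀ d, ∀ e ∈ (Vc' d).support, ∀ j, Even (e (Sum.inl j)))
    (K : ℕ → MvPolynomial (Fin n ⊕ Fin n) ℝ)
    (hB : BirkhoffNormalizes u Vc K) (hB' : BirkhoffNormalizes u Vc' K) :
    ∀ d, Vc d = Vc' d :=
  stmt16_general u hind Vc Vc' hhom hhom' hlow hlow' hx hx' heven heven' K hB hB'
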